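/- arXiv:math/0210400 — 3 statements merged into one kernel-verified Lean document; each statement's English description precedes it below -/
import Mathlib

section
/- Let R be a discrete valuation ring with fraction field K, let A be a finite étale R-algebra, and let L be a field which is a quotient of the K-algebra A ⊗_R K. Then L is a finite separable extension of K which is unramified over R: the integral closure of R in L is a finite étale R-algebra. -/
open TensorProduct

/-!
Let `B ⊆ L` be the image of `A`. It is a domain, finite and unramified over the DVR `R`, hence
a Dedekind domain, in particular integrally closed; it is torsion-free, hence flat, over `R`.
Since `A ⊗_R K` is the localization of `A` at `R ∖ {0}`, every element of `L` is a quotient of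
an element of `B` by a nonzero element of `R`, so `L` is the fraction field of `B` and `B` is
the integral closure of `R` in `L`. Finally `L` is a quotient of the finite unramified
`K`-algebra `A ⊗_R K`, so it is finite and separable over `K`.
-/

theorem AlgHom.exists_smul_mem_range_includeRight_of_surjective {R K A L : Type*} [CommRing R]
    (M : Submonoid R) [CommRing K] [Algebra R K] [IsLocalization M K] [CommRing A] [Algebra R A]
    [CommRing L] [Algebra R L] [Algebra K L] [IsScalarTower R K L]
    (φ : K ⊗[R] A →ₐ[K] L) (hφ : Function.Surjective φ) (z : L) :
    ∃ r ∈ M,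
      r • z ∈ ((φ.restrictScalars R).comp Algebra.TensorProduct.includeRight).range := by
  obtain ⟨t, rfl⟩ := hφ z
  obtain ⟨⟨a, r⟩, hr⟩ := IsLocalizedModule.surj M (TensorProduct.mk R K A 1) t
  refine ⟨r, r.2, a, ?_⟩
  simpa [Submonoid.smul_def, map_smul] using congrArg (φ.restrictScalars R) hr.symm

theorem Subalgebra.isFractionRing_of_forall_exists_smul_mem {R L : Type*} [CommRing R] [Field L]
    [Algebra R L] [FaithfulSMul R L] (B : Subalgebra R L)
    (h : ∀ z : L, ∃ r : R, r ≠ 0 ∧ r • z ∈ B) : IsFractionRing B L := by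
  refine IsFractionRing.of_field B L fun z => ?_
  obtain ⟨r, hr, hz⟩ := h z
  refine ⟨⟨r • z, hz⟩, algebraMap R B r, ?_⟩
  have hr' : algebraMap R L r ≠ 0 := by simpa using hr
  simp only [Algebra.smul_def, Subalgebra.algebraMap_apply, SubalgebraClass.coe_algebraMap]
  exact (mul_div_cancel_left₀ z hr').symm

theorem Subalgebra.integralClosure_eq_of_isIntegrallyClosed {R L : Type*} [CommRing R] [Field L]
    [Algebra R L] (B : Subalgebra R L) [IsIntegrallyClosed B] [IsFractionRing B L]
    [Algebra.IsIntegral R B] : integralClosure R L = B := by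
  refine le_antisymm (fun x hx => ?_) fun x hx => ?_
  · obtain ⟨y, rfl⟩ := IsIntegrallyClosed.isIntegral_iff.mp (IsIntegral.tower_top (A := B) hx)
    exact y.2
  · exact (Algebra.IsIntegral.isIntegral (⟨x, hx⟩ : B)).map B.val

theorem residue_field_of_finite_etale_unramified_general
    (R : Type) [CommRing R] [IsDomain R] [IsDiscreteValuationRing R]
    (A : Type) [CommRing A] [Algebra R A] [Module.Finite R A]
    [Algebra.FormallyUnramified R A]
    (L : Type) [Field L] [Algebra R L] [Algebra (FractionRing R) L]
    [IsScalarTower R (FractionRing R) L]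
    (φ : (FractionRing R) ⊗[R] A →ₐ[FractionRing R] L)
    (hφ : Function.Surjective φ) :
    FiniteDimensional (FractionRing R) L ∧ Algebra.IsSeparable (FractionRing R) L ∧
    Module.Finite R ↥(integralClosure R L) ∧ Module.Flat R ↥(integralClosure R L) ∧
    Algebra.FormallyUnramified R ↥(integralClosure R L) := by
  have : FiniteDimensional (FractionRing R) L := .of_surjective φ.toLinearMap hφ
  have : Algebra.FormallyUnramified (FractionRing R) L := .of_surjective φ hφ
  have : FaithfulSMul R L := .trans R (FractionRing R) L
  set f := (φ.restrictScalars R).comp Algebra.TensorProduct.includeRight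
  have : Module.Finite R f.range := .of_surjective f.rangeRestrict.toLinearMap
    f.rangeRestrict_surjective
  have : Algebra.FormallyUnramified R f.range := .of_surjective f.rangeRestrict
    f.rangeRestrict_surjective
  have : IsDedekindDomain f.range := isDedekindDomain.of_formallyUnramified R f.range
  have : IsFractionRing f.range L :=
    f.range.isFractionRing_of_forall_exists_smul_mem fun z => by
      obtain ⟨r, hr, hz⟩ :=
        φ.exists_smul_mem_range_includeRight_of_surjective (nonZeroDivisors R) hφ z
      exact ⟨r, nonZeroDivisors.ne_zero hr, hz⟩
  rw [f.range.integralClosure_eq_of_isIntegrallyClosed]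
  exact ⟨inferInstance, Algebra.FormallyUnramified.isSeparable _ L, inferInstance, inferInstance,
    inferInstance⟩

/-- If `R` is a DVR with fraction field `K`, `A` a finite étale `R`-algebra, and `L` a field
quotient of `A ⊗_R K`, then `L/K` is finite separable and unramified over `R`: the integral
closure of `R` in `L` is a finite étale `R`-algebra. -/
theorem residue_field_of_finite_etale_unramified
    (R : Type) [CommRing R] [IsDomain R] [IsDiscreteValuationRing R]
    (A : Type) [CommRing A] [Algebra R A] [Module.Finite R A] [Module.Flat R A]
    [Algebra.FormallyUnramified R A]
    (L : Type) [Field L] [Algebra R L] [Algebra (FractionRing R) L]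
    [IsScalarTower R (FractionRing R) L]
    (φ : (FractionRing R) ⊗[R] A →ₐ[FractionRing R] L)
    (hφ : Function.Surjective φ) :
    FiniteDimensional (FractionRing R) L ∧ Algebra.IsSeparable (FractionRing R) L ∧
    Module.Finite R ↥(integralClosure R L) ∧ Module.Flat R ↥(integralClosure R L) ∧
    Algebra.FormallyUnramified R ↥(integralClosure R L) :=
  residue_field_of_finite_etale_unramified_general R A L φ hφ
end

section
/- Let R → R' be a faithfully flat ring homomorphism and let M be a finitely presented R-module. If M ⊗_R R' is a projective R'-module, then M is a projective R-module. -/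
open TensorProduct

/-- Descent of projectivity along a faithfully flat ring map, for finitely presented modules. -/
theorem projective_of_faithfullyFlat_baseChange
    (R R' : Type) [CommRing R] [CommRing R'] [Algebra R R'] [Module.FaithfullyFlat R R']
    (M : Type) [AddCommGroup M] [Module R M] [Module.FinitePresentation R M]
    (h : Module.Projective R' (R' ⊗[R] M)) :
    Module.Projective R M := by
  have : Module.Flat R M := .of_flat_tensorProduct R M R'
  exact Module.Flat.projective_of_finitePresentation
end

section
/- Let R be a commutative ring with no nontrivial idempotents (Spec R connected), and let A be an R-algebra that is finite free of rank n over R and étale. Then the R-algebra Hom set Hom_{R-alg}(A, R) has cardinality at most n. -/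
/-- An idempotent in a ring with connected prime spectrum is `0` or `1`. -/
lemma idem_eq_zero_or_one_of_connected
    {R : Type} [CommRing R] [ConnectedSpace (PrimeSpectrum R)]
    {e : R} (he : IsIdempotentElem e) : e = 0 ∨ e = 1 := by
  have hclopen : IsClopen (PrimeSpectrum.basicOpen e : Set (PrimeSpectrum R)) :=
    PrimeSpectrum.isClopen_iff.mpr ⟨e, he, rfl⟩
  rcases isClopen_iff.mp hclopen with h | h
  · left
    refine PrimeSpectrum.basicOpen_injOn_isIdempotentElem he IsIdempotentElem.zero ?_
    refine SetLike.ext' ?_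
    rw [h, PrimeSpectrum.basicOpen_zero]
    rfl
  · right
    refine PrimeSpectrum.basicOpen_injOn_isIdempotentElem he IsIdempotentElem.one ?_
    refine SetLike.ext' ?_
    rw [h, PrimeSpectrum.basicOpen_one]
    rfl

/-- The kernel of an algebra section of a finite unramified algebra is generated by
an idempotent. -/
lemma exists_idem_ker {R : Type} [CommRing R]
    {A : Type} [CommRing A] [Algebra R A] [Module.Finite R A]
    [Algebra.FormallyUnramified R A] (f : A →ₐ[R] R) :
    ∃ e : A, IsIdempotentElem e ∧ RingHom.ker f = Ideal.span {e} := by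
  set I : Ideal A := RingHom.ker f with hI
  -- I is idempotent: I ≤ I ^ 2 via formal unramifiedness.
  have hmem : ∀ x : A, x - algebraMap R A (f x) ∈ I := by
    intro x
    simp [hI, RingHom.mem_ker, map_sub, AlgHom.commutes]
  have hII : I * I = I := by
    -- use unramifiedness with the square-zero ideal I/(I^2) in A ⧸ I^2
    have key : ∀ x : A, x - algebraMap R A (f x) ∈ I ^ 2 := by
      have hnil : IsNilpotent (I.map (Ideal.Quotient.mk (I ^ 2))) := by
        refine ⟨2, ?_⟩
        rw [← Ideal.map_pow]
        simp [Ideal.map_quotient_self]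
      have heq : Ideal.Quotient.mkₐ R (I ^ 2) =
          ((Ideal.Quotient.mkₐ R (I ^ 2)).comp ((Algebra.ofId R A).comp f)) := by
        refine Algebra.FormallyUnramified.ext (I.map (Ideal.Quotient.mk (I ^ 2))) hnil ?_
        intro x
        rw [Ideal.Quotient.eq]
        refine Ideal.mem_map_of_mem _ ?_
        simpa [Algebra.ofId_apply] using hmem x
      intro x
      have := congrArg (fun g : A →ₐ[R] A ⧸ (I ^ 2) => g x) heq
      simp only [AlgHom.comp_apply, Ideal.Quotient.mkₐ_eq_mk, Algebra.ofId_apply] at this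
      rw [← sub_eq_zero, ← map_sub, ← RingHom.mem_ker, Ideal.mk_ker] at this
      · exact this
    refine le_antisymm Ideal.mul_le_right ?_
    intro x hx
    · have hx2 := key x
      have : f x = 0 := hx
      rw [this, map_zero, sub_zero] at hx2
      rw [← pow_two]
      exact hx2
  -- I is finitely generated
  have hfg : I.FG := by
    apply Submodule.FG.of_restrictScalars R
    have : Submodule.restrictScalars R I =
        LinearMap.range (LinearMap.id - (Algebra.linearMap R A).comp f.toLinearMap) := by
      ext x
      constructor
      · intro hx
        refine ⟨x, ?_⟩
        have : f x = 0 := hx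
        simp [this]
      · rintro ⟨y, rfl⟩
        simpa using hmem y
    rw [this, LinearMap.range_eq_map]
    exact Submodule.FG.map _ (Module.Finite.fg_top (R := R) (M := A))
  have := (Ideal.isIdempotentElem_iff_of_fg I hfg).mp (by rwa [IsIdempotentElem])
  obtain ⟨e, he, hIe⟩ := this
  exact ⟨e, he, hIe⟩

/-- Over a ring with connected spectrum, a finite étale algebra of rank `n` has at most `n`
algebra sections `A → R`. -/
theorem card_algHom_le_rank
    (R : Type) [CommRing R] [ConnectedSpace (PrimeSpectrum R)]
    (A : Type) [CommRing A] [Algebra R A] [Module.Free R A] [Module.Finite R A]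
    [Algebra.FormallyUnramified R A] (n : ℕ) (hn : Module.finrank R A = n) :
    Nat.card (A →ₐ[R] R) ≤ n := by
  have hnontriv : Nontrivial R := by
    by_contra h
    rw [not_nontrivial_iff_subsingleton] at h
    have : IsEmpty (PrimeSpectrum R) := inferInstance
    exact this.false (Nonempty.some inferInstance)
  -- choose idempotents for each section
  choose e he hke using fun f : A →ₐ[R] R => exists_idem_ker f
  have hfe : ∀ f : A →ₐ[R] R, f (e f) = 0 := by
    intro f
    have : e f ∈ RingHom.ker f := (hke f) ▸ Ideal.subset_span rfl
    exact this
  have hge : ∀ f g : A →ₐ[R] R, g ≠ f → g (e f) = 1 := by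
    intro f g hgf
    have hidem : IsIdempotentElem (g (e f)) := by
      unfold IsIdempotentElem
      rw [← map_mul, (he f).eq]
    rcases idem_eq_zero_or_one_of_connected hidem with h0 | h1
    · exfalso
      apply hgf
      ext x
      have hx : x - algebraMap R A (f x) ∈ RingHom.ker f := by
        simp [RingHom.mem_ker, map_sub, AlgHom.commutes]
      rw [hke f, Ideal.mem_span_singleton] at hx
      obtain ⟨c, hc⟩ := hx
      have := congrArg g hc
      rw [map_sub, map_mul, h0, zero_mul, sub_eq_zero, AlgHom.commutes] at this
      simpa using this
    · exact h1
  -- case on finiteness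
  by_cases hfin : Finite (A →ₐ[R] R)
  · haveI := hfin
    haveI := Fintype.ofFinite (A →ₐ[R] R)
    -- surjective linear map A → ((A →ₐ[R] R) → R)
    set Φ : A →ₗ[R] ((A →ₐ[R] R) → R) :=
      LinearMap.pi (fun f => f.toLinearMap) with hΦ
    have hsurj : Function.Surjective Φ := by
      intro c
      refine ⟨∑ f : A →ₐ[R] R, c f • (1 - e f), ?_⟩
      ext g
      simp only [hΦ, LinearMap.pi_apply, AlgHom.toLinearMap_apply, map_sum, map_smul]
      rw [Finset.sum_eq_single g]
      · simp [map_sub, hfe g, smul_eq_mul]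
      · intro f _ hf
        rw [map_sub, map_one, hge f g (Ne.symm hf)]
        simp
      · simp
    haveI : StrongRankCondition R := inferInstance
    have hrank := LinearMap.rank_le_of_surjective Φ hsurj
    rw [rank_fun'] at hrank
    have hA : Module.rank R A = n := by
      rw [← hn, Module.finrank_eq_rank]
    rw [hA] at hrank
    have : Fintype.card (A →ₐ[R] R) ≤ n := by exact_mod_cast hrank
    rwa [Nat.card_eq_fintype_card]
  · haveI : Infinite (A →ₐ[R] R) := ⟨hfin⟩
    rw [Nat.card_eq_zero_of_infinite]
    exact Nat.zero_le n
end
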